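/- arXiv:1903.06263 — 2 statements merged into one kernel-verified Lean document; each statement's English description precedes it below -/
import Mathlib

section
/- Least action principle. Let d, n ≥ 1 and s : Z_n^d → ℝ, and set 𝓕_s = { f : Z_n^d → ℝ : f ≥ 0 and s + Δf ≤ 1 pointwise }. Then: (1) for every legal toppling procedure ℓ for s and every f ∈ 𝓕_s, ℓ_∞(x) ≤ f(x) for all x (where ℓ_∞(x) = lim_{t→∞} ℓ_t(x) ∈ [0,∞]); (2) for every legal toppling procedure ℓ for s and every stabilising toppling procedure w for s, ℓ_∞(x) ≤ w_∞(x) for all x; (3) for every legal stabilising toppling procedure w for s and every x ∈ Z_n^d, w_∞(x) = inf{ f(x) : f ∈ 𝓕_s }. In particular w_∞ does not depend on the choice of legal stabilising toppling procedure. -/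
open Filter

/-- The graph Laplacian on the discrete torus `(ℤ/nℤ)^d`:
`Δf(x) = (1/(2d)) Σ_{y ∼ x} (f(y) - f(x))`, the sum over the `2d` nearest neighbours. -/
noncomputable def torusLap (d n : ℕ) (f : (Fin d → ZMod n) → ℝ) (x : Fin d → ZMod n) : ℝ :=
  (2 * (d : ℝ))⁻¹ * ∑ i : Fin d,
    ((f (Function.update x i (x i + 1)) - f x) + (f (Function.update x i (x i - 1)) - f x))

/-- A (discrete-time) toppling procedure: `w_0 ≡ 0`, `w_t(x) ≥ 0`, nondecreasing in `t`. -/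
def IsTopplingProcedure (d n : ℕ) (w : ℕ → (Fin d → ZMod n) → ℝ) : Prop :=
  (∀ x, w 0 x = 0) ∧ (∀ t x, 0 ≤ w t x) ∧ (∀ t x, w t x ≤ w (t + 1) x)

/-- A toppling procedure is legal for `s` if `w_{t+1}(x) - w_t(x) ≤ max(s_t(x) - 1, 0)`
where `s_t = s + Δ w_t`. -/
def IsLegal (d n : ℕ) (s : (Fin d → ZMod n) → ℝ) (w : ℕ → (Fin d → ZMod n) → ℝ) : Prop :=
  ∀ t x, w (t + 1) x - w t x ≤ max (s x + torusLap d n (w t) x - 1) 0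

lemma torusLap_add_self (d n : ℕ) (hd : 1 ≤ d) (f : (Fin d → ZMod n) → ℝ)
    (x : Fin d → ZMod n) :
    f x + torusLap d n f x = (2 * (d : ℝ))⁻¹ * ∑ i : Fin d,
      (f (Function.update x i (x i + 1)) + f (Function.update x i (x i - 1))) := by
  have hd' : (d : ℝ) ≠ 0 := Nat.cast_ne_zero.mpr (by omega)
  unfold torusLap
  have h : ∑ i : Fin d,
      ((f (Function.update x i (x i + 1)) - f x) + (f (Function.update x i (x i - 1)) - f x))
      = (∑ i : Fin d,
        (f (Function.update x i (x i + 1)) + f (Function.update x i (x i - 1))))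
        - (2 * (d : ℝ)) * f x := by
    simp only [Finset.sum_add_distrib, Finset.sum_sub_distrib, Finset.sum_const,
      Finset.card_univ, Fintype.card_fin, nsmul_eq_mul]
    ring
  rw [h, mul_sub]
  have : (2 * (d : ℝ))⁻¹ * (2 * (d : ℝ) * f x) = f x := by
    rw [← mul_assoc, inv_mul_cancel₀ (by positivity), one_mul]
  rw [this]
  ring

lemma legal_le_stable (d n : ℕ) (hd : 1 ≤ d)
    (s : (Fin d → ZMod n) → ℝ) (ℓ : ℕ → (Fin d → ZMod n) → ℝ)
    (hℓ : IsTopplingProcedure d n ℓ) (hleg : IsLegal d n s ℓ)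
    (f : (Fin d → ZMod n) → ℝ) (hf0 : ∀ x, 0 ≤ f x)
    (hf1 : ∀ x, s x + torusLap d n f x ≤ 1) :
    ∀ t x, ℓ t x ≤ f x := by
  intro t
  induction t with
  | zero => intro x; rw [hℓ.1]; exact hf0 x
  | succ t ih =>
    intro x
    have hleg' := hleg t x
    rcases le_or_gt (s x + torusLap d n (ℓ t) x - 1) 0 with h0 | h0
    · rw [max_eq_right h0] at hleg'
      exact (by linarith : ℓ (t + 1) x ≤ ℓ t x).trans (ih x)
    · rw [max_eq_left h0.le] at hleg'
      have h1 : s x - 1 ≤ -torusLap d n f x := by linarith [hf1 x]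
      have h2 : ℓ t x + torusLap d n (ℓ t) x ≤ f x + torusLap d n f x := by
        rw [torusLap_add_self d n hd, torusLap_add_self d n hd]
        refine mul_le_mul_of_nonneg_left (Finset.sum_le_sum fun i _ => ?_) (by positivity)
        exact add_le_add (ih _) (ih _)
      linarith

/-- **Least action principle.** For `𝓕_s = {f ≥ 0 : s + Δf ≤ 1}`:
(1) any legal toppling procedure satisfies `ℓ_∞ ≤ f` for all `f ∈ 𝓕_s`;
(2) any legal toppling procedure satisfies `ℓ_∞ ≤ w_∞` for any stabilising procedure `w`
(with pointwise limit `W`); (3) for any legal stabilising procedure `w` with limit `W`,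
`W(x) = inf { f(x) : f ∈ 𝓕_s }`, so `w_∞` does not depend on the choice. -/
theorem least_action_principle (d n : ℕ) (hd : 1 ≤ d) [NeZero n]
    (s : (Fin d → ZMod n) → ℝ) :
    (∀ ℓ : ℕ → (Fin d → ZMod n) → ℝ, IsTopplingProcedure d n ℓ → IsLegal d n s ℓ →
      ∀ f : (Fin d → ZMod n) → ℝ, (∀ x, 0 ≤ f x) → (∀ x, s x + torusLap d n f x ≤ 1) →
      ∀ t x, ℓ t x ≤ f x) ∧
    (∀ ℓ : ℕ → (Fin d → ZMod n) → ℝ, IsTopplingProcedure d n ℓ → IsLegal d n s ℓ →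
      ∀ (w : ℕ → (Fin d → ZMod n) → ℝ) (W : (Fin d → ZMod n) → ℝ),
        IsTopplingProcedure d n w →
        (∀ x, Tendsto (fun t => w t x) atTop (nhds (W x))) →
        (∀ x, s x + torusLap d n W x ≤ 1) →
        ∀ t x, ℓ t x ≤ W x) ∧
    (∀ (w : ℕ → (Fin d → ZMod n) → ℝ) (W : (Fin d → ZMod n) → ℝ),
      IsTopplingProcedure d n w → IsLegal d n s w →
      (∀ x, Tendsto (fun t => w t x) atTop (nhds (W x))) →
      (∀ x, s x + torusLap d n W x ≤ 1) →
      ∀ x, IsGLB {y : ℝ | ∃ f : (Fin d → ZMod n) → ℝ,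
        (∀ z, 0 ≤ f z) ∧ (∀ z, s z + torusLap d n f z ≤ 1) ∧ y = f x} (W x)) := by
  refine ⟨fun ℓ h1 h2 f hf0 hf1 => legal_le_stable d n hd s ℓ h1 h2 f hf0 hf1, ?_, ?_⟩
  · intro ℓ h1 h2 w W hw hW hW1 t x
    exact legal_le_stable d n hd s ℓ h1 h2 W
      (fun z => ge_of_tendsto' (hW z) fun t => hw.2.1 t z) hW1 t x
  · intro w W hw hleg hW hW1 x
    constructor
    · rintro y ⟨f, hf0, hf1, rfl⟩
      exact le_of_tendsto' (hW x)
        (fun t => legal_le_stable d n hd s w hw hleg f hf0 hf1 t x)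
    · intro b hb
      exact hb ⟨W, fun z => ge_of_tendsto' (hW z) fun t => hw.2.1 t z, hW1, rfl⟩
end

section
/- Obstacle-problem representation of the odometer on the torus. Let d, n ≥ 1, let s : Z_n^d → ℝ satisfy Σ_{x ∈ Z_n^d} s(x) = n^d, and let γ : Z_n^d → ℝ satisfy Δγ = 1 − s. Then the unique function u : Z_n^d → ℝ with Δu = s − 1 and min_x u(x) = 0 (the odometer of s) is u = (max_{z ∈ Z_n^d} γ(z)) − γ; moreover, for every x ∈ Z_n^d, max_{z ∈ Z_n^d} γ(z) = inf{ f(x) : f : Z_n^d → ℝ, f ≥ γ pointwise, Δf ≤ 0 pointwise }, i.e. u = v − γ where v is the solution of the obstacle problem with obstacle γ. -/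
def shiftE (d n : ℕ) (i : Fin d) : (Fin d → ZMod n) ≃ (Fin d → ZMod n) where
  toFun x := Function.update x i (x i + 1)
  invFun x := Function.update x i (x i - 1)
  left_inv x := by
    funext j
    rcases eq_or_ne j i with rfl | h
    · simp
    · simp [Function.update_of_ne h]
  right_inv x := by
    funext j
    rcases eq_or_ne j i with rfl | h
    · simp
    · simp [Function.update_of_ne h]

lemma sum_shift (d n : ℕ) [NeZero n] (f : (Fin d → ZMod n) → ℝ) (i : Fin d) :
    ∑ x, f (Function.update x i (x i + 1)) = ∑ x, f x :=
  Equiv.sum_comp (shiftE d n i) f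

lemma sum_shift' (d n : ℕ) [NeZero n] (f : (Fin d → ZMod n) → ℝ) (i : Fin d) :
    ∑ x, f (Function.update x i (x i - 1)) = ∑ x, f x :=
  Equiv.sum_comp (shiftE d n i).symm f

lemma sum_torusLap (d n : ℕ) [NeZero n] (f : (Fin d → ZMod n) → ℝ) :
    ∑ x, torusLap d n f x = 0 := by
  unfold torusLap
  rw [← Finset.mul_sum, Finset.sum_comm]
  have : ∀ i : Fin d, ∑ x : Fin d → ZMod n,
      ((f (Function.update x i (x i + 1)) - f x) + (f (Function.update x i (x i - 1)) - f x)) = 0 := by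
    intro i
    rw [Finset.sum_add_distrib, Finset.sum_sub_distrib, Finset.sum_sub_distrib,
      sum_shift d n f i, sum_shift' d n f i]
    ring
  rw [Finset.sum_congr rfl (fun i _ => this i), Finset.sum_const, smul_zero, mul_zero]

lemma harmonic_shift (d n : ℕ) [NeZero n] (hd : 1 ≤ d)
    (f : (Fin d → ZMod n) → ℝ) (hf : ∀ x, torusLap d n f x = 0) :
    ∀ (x : Fin d → ZMod n) (i : Fin d), f (Function.update x i (x i + 1)) = f x := by
  -- energy method
  have key : ∀ i : Fin d, ∑ x : Fin d → ZMod n, f x *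
      ((f (Function.update x i (x i + 1)) - f x) + (f (Function.update x i (x i - 1)) - f x))
      = - ∑ x : Fin d → ZMod n, (f (Function.update x i (x i + 1)) - f x)^2 := by
    intro i
    have h1 : ∑ x : Fin d → ZMod n, f x * f (Function.update x i (x i - 1))
        = ∑ x : Fin d → ZMod n, f x * f (Function.update x i (x i + 1)) := by
      have := Equiv.sum_comp (shiftE d n i)
        (fun x => f x * f (Function.update x i (x i - 1)))
      rw [← this]
      apply Finset.sum_congr rfl
      intro x _
      have : Function.update ((shiftE d n i) x) i (((shiftE d n i) x) i - 1) = x :=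
        (shiftE d n i).left_inv x
      simp only [this]
      exact mul_comm _ _
    have h2 : ∑ x : Fin d → ZMod n, (f (Function.update x i (x i + 1)))^2
        = ∑ x : Fin d → ZMod n, (f x)^2 := sum_shift d n (fun x => (f x)^2) i
    have lhs : ∑ x : Fin d → ZMod n, f x *
        ((f (Function.update x i (x i + 1)) - f x) + (f (Function.update x i (x i - 1)) - f x))
        = (∑ x : Fin d → ZMod n, f x * f (Function.update x i (x i + 1)))
          + (∑ x : Fin d → ZMod n, f x * f (Function.update x i (x i - 1)))
          - 2 * ∑ x : Fin d → ZMod n, (f x)^2 := by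
      rw [Finset.mul_sum, ← Finset.sum_add_distrib, ← Finset.sum_sub_distrib]
      exact Finset.sum_congr rfl (fun x _ => by ring)
    have rhs : ∑ x : Fin d → ZMod n, (f (Function.update x i (x i + 1)) - f x)^2
        = 2 * ∑ x : Fin d → ZMod n, (f x)^2
          - 2 * ∑ x : Fin d → ZMod n, f x * f (Function.update x i (x i + 1)) := by
      have : ∀ x : Fin d → ZMod n, (f (Function.update x i (x i + 1)) - f x)^2
          = (f (Function.update x i (x i + 1)))^2 + (f x)^2
            - 2 * (f x * f (Function.update x i (x i + 1))) := by intro x; ring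
      rw [Finset.sum_congr rfl (fun x _ => this x), Finset.sum_sub_distrib,
        Finset.sum_add_distrib, h2, ← Finset.mul_sum]
      ring
    rw [lhs, rhs, h1]
    ring
  have total : ∑ i : Fin d, ∑ x : Fin d → ZMod n,
      (f (Function.update x i (x i + 1)) - f x)^2 = 0 := by
    have hz : ∑ x : Fin d → ZMod n, f x * torusLap d n f x = 0 := by
      apply Finset.sum_eq_zero; intro x _; rw [hf x, mul_zero]
    have expand : ∑ x : Fin d → ZMod n, f x * torusLap d n f x
        = (2 * (d : ℝ))⁻¹ * ∑ i : Fin d, ∑ x : Fin d → ZMod n, f x *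
          ((f (Function.update x i (x i + 1)) - f x) + (f (Function.update x i (x i - 1)) - f x)) := by
      unfold torusLap
      simp only [Finset.mul_sum]
      rw [Finset.sum_comm]
      apply Finset.sum_congr rfl; intro i _
      exact Finset.sum_congr rfl (fun x _ => by ring)
    rw [Finset.sum_congr rfl (fun i _ => key i)] at expand
    have h2d : (2 * (d : ℝ))⁻¹ ≠ 0 := by
      have : (0:ℝ) < d := by exact_mod_cast hd
      positivity
    rw [hz] at expand
    have := (mul_eq_zero.mp expand.symm).resolve_left h2d
    rw [Finset.sum_neg_distrib] at this
    linarith [neg_eq_zero.mp this]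
  intro x i
  have hnn : ∀ j : Fin d, (0:ℝ) ≤ ∑ x : Fin d → ZMod n,
      (f (Function.update x j (x j + 1)) - f x)^2 :=
    fun j => Finset.sum_nonneg (fun x _ => sq_nonneg _)
  have hi0 : ∑ x : Fin d → ZMod n, (f (Function.update x i (x i + 1)) - f x)^2 = 0 :=
    (Finset.sum_eq_zero_iff_of_nonneg (fun j _ => hnn j)).mp total i (Finset.mem_univ i)
  have := (Finset.sum_eq_zero_iff_of_nonneg (fun x _ => sq_nonneg _)).mp hi0 x (Finset.mem_univ x)
  have := sq_eq_zero_iff.mp this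
  linarith

lemma shift_const (d n : ℕ) [NeZero n] (f : (Fin d → ZMod n) → ℝ)
    (hsh : ∀ (x : Fin d → ZMod n) (i : Fin d), f (Function.update x i (x i + 1)) = f x) :
    ∀ x y : Fin d → ZMod n, f x = f y := by
  have hnat : ∀ (m : ℕ) (x : Fin d → ZMod n) (i : Fin d),
      f (Function.update x i (x i + (m : ZMod n))) = f x := by
    intro m
    induction m with
    | zero => intro x i; simp
    | succ m ih =>
      intro x i
      have e1 : Function.update x i (x i + ((m+1 : ℕ) : ZMod n))
          = Function.update (Function.update x i (x i + (m : ZMod n))) i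
            ((Function.update x i (x i + (m : ZMod n))) i + 1) := by
        rw [Function.update_idem, Function.update_self]
        push_cast
        ring_nf
      rw [e1, hsh, ih]
  have hzmod : ∀ (x : Fin d → ZMod n) (i : Fin d) (c : ZMod n),
      f (Function.update x i (x i + c)) = f x := by
    intro x i c
    obtain ⟨m, rfl⟩ := ZMod.natCast_zmod_surjective c
    exact hnat m x i
  intro x y
  have main : ∀ S : Finset (Fin d), f (fun j => if j ∈ S then y j else x j) = f x := by
    intro S
    induction S using Finset.induction_on with
    | empty => simp
    | @insert i S hi ih =>
      have e2 : (fun j => if j ∈ insert i S then y j else x j)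
          = Function.update (fun j => if j ∈ S then y j else x j) i
            ((fun j => if j ∈ S then y j else x j) i + (y i - x i)) := by
        funext j
        rcases eq_or_ne j i with rfl | h
        · simp [hi]
        · simp [Function.update_of_ne h, Finset.mem_insert, h]
      rw [e2, hzmod, ih]
  have := main Finset.univ
  simp only [Finset.mem_univ, if_true] at this
  exact this.symm

lemma harmonic_const (d n : ℕ) [NeZero n] (hd : 1 ≤ d)
    (f : (Fin d → ZMod n) → ℝ) (hf : ∀ x, torusLap d n f x = 0) :
    ∀ x y : Fin d → ZMod n, f x = f y :=
  shift_const d n f (harmonic_shift d n hd f hf)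

lemma torusLap_add (d n : ℕ) (f g : (Fin d → ZMod n) → ℝ) (x : Fin d → ZMod n) :
    torusLap d n (f + g) x = torusLap d n f x + torusLap d n g x := by
  unfold torusLap
  rw [← mul_add, ← Finset.sum_add_distrib]
  congr 1
  exact Finset.sum_congr rfl (fun i _ => by simp [Pi.add_apply]; ring)

lemma torusLap_const (d n : ℕ) (c : ℝ) (x : Fin d → ZMod n) :
    torusLap d n (fun _ => c) x = 0 := by
  unfold torusLap; simp

/-- **Obstacle-problem representation of the odometer.** If `Σ_x s(x) = n^d`,
`Δγ = 1 - s`, and `u` is the odometer of `s` (i.e. `Δu = s - 1`, `u ≥ 0`, `min u = 0`), then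
`u = (max_z γ(z)) - γ`, and for every `x`,
`max_z γ(z) = inf { f(x) : f ≥ γ, Δf ≤ 0 }`, i.e. `u = v - γ` with `v` the solution of the
obstacle problem with obstacle `γ`. -/
theorem obstacle_representation_of_odometer (d n : ℕ) (hd : 1 ≤ d) [NeZero n]
    (s γ u : (Fin d → ZMod n) → ℝ)
    (hs : ∑ x : Fin d → ZMod n, s x = (n : ℝ) ^ d)
    (hγ : ∀ x, torusLap d n γ x = 1 - s x)
    (hu : ∀ x, torusLap d n u x = s x - 1)
    (hu0 : ∀ x, 0 ≤ u x) (humin : ∃ x, u x = 0) :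
    (∀ x, u x = (⨆ z, γ z) - γ x) ∧
    (∀ x : Fin d → ZMod n,
      IsGLB {y : ℝ | ∃ f : (Fin d → ZMod n) → ℝ,
        (∀ z, γ z ≤ f z) ∧ (∀ z, torusLap d n f z ≤ 0) ∧ y = f x} (⨆ z, γ z)) := by
  obtain ⟨x0, hx0⟩ := humin
  have hharm : ∀ x, torusLap d n (u + γ) x = 0 := by
    intro x; rw [torusLap_add, hu, hγ]; ring
  have hconst := harmonic_const d n hd (u + γ) hharm
  have hux : ∀ x, u x = γ x0 - γ x := by
    intro x
    have h := hconst x x0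
    simp only [Pi.add_apply, hx0, zero_add] at h
    linarith
  have hle : ∀ z, γ z ≤ γ x0 := by
    intro z; have := hu0 z; rw [hux z] at this; linarith
  have hsup : (⨆ z, γ z) = γ x0 := by
    apply le_antisymm
    · exact ciSup_le hle
    · exact le_ciSup (Set.Finite.bddAbove (Set.finite_range γ)) x0
  refine ⟨fun x => by rw [hsup, hux], fun x => ?_⟩
  constructor
  · rintro y ⟨f, hfγ, hfsub, rfl⟩
    have hz : ∀ z, torusLap d n f z = 0 := by
      intro z
      exact (Finset.sum_eq_zero_iff_of_nonpos (fun w _ => hfsub w)).mp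
        (sum_torusLap d n f) z (Finset.mem_univ z)
    have hc := harmonic_const d n hd f hz
    rw [hsup]
    calc γ x0 ≤ f x0 := hfγ x0
      _ = f x := hc x0 x
  · intro b hb
    refine hb ⟨fun _ => ⨆ z, γ z, fun z => ?_, fun z => le_of_eq (torusLap_const d n _ z), rfl⟩
    rw [hsup]; exact hle z
end
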